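/- Let d ≥ 1 and let F : ℝ^d → ℝ be Lipschitz continuous and differentiable at a point x ∈ ℝ^d. For σ > 0 let μ_σ be the centered isotropic Gaussian probability measure on ℝ^d with covariance σ²·I, and let (a(σ), b(σ)) ∈ ℝ × ℝ^d be the unique minimizer over affine functions of the expected squared loss ∫ (F(x+z) − a − ⟨b, z⟩)² dμ_σ(z). Then as σ → 0⁺, the slope vector b(σ) converges to the gradient ∇F(x) and the intercept a(σ) converges to F(x). -/

import Mathlib

open MeasureTheory ProbabilityTheory Filter Topology

/-- The expected squared loss of the affine surrogate `z ↦ a + ⟨b, z⟩` against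
the black box `F` around `x`, under the centered isotropic Gaussian on `ℝ^d`
with covariance `σ²·I`. -/
noncomputable def gaussAffineLoss (d : ℕ) (F : (Fin d → ℝ) → ℝ)
    (x : Fin d → ℝ) (σ : ℝ) (a : ℝ) (b : Fin d → ℝ) : ℝ :=
  ∫ z, (F (x + z) - (a + ∑ i, b i * z i)) ^ 2
    ∂(Measure.pi fun _ : Fin d => gaussianReal 0 (Real.toNNReal (σ ^ 2)))

/-!
After the substitution `z = σ • w`, the loss is the squared `L²(γ)` distance from
`w ↦ F (x + σ • w)` to an affine function of `w`, where `γ` is the standard Gaussian on `ℝ^d`.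
Since `1` and the coordinates `w i` are orthonormal in `L²(γ)`, the minimizer is the orthogonal
projection: `a σ = ∫ F (x + σ • w) dγ` and `σ * b σ i = ∫ F (x + σ • w) * w i dγ`. As `w i` is
centred, `b σ i = ∫ σ⁻¹ (F (x + σ • w) - F x) * w i dγ`; the Lipschitz bound `K ‖w‖ |w i|` lets
dominated convergence pass to the limit `∫ DF(x) w * w i dγ = DF(x) eᵢ`, and likewise
`a σ → F x`.
-/

section

variable {E : Type*} [NormedAddCommGroup E] [NormedSpace ℝ E] [MeasurableSpace E]
  {μ : Measure E} {F : E → ℝ} {K : NNReal}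

lemma LipschitzWith.memLp_comp_add_smul [IsFiniteMeasure μ] (hF : LipschitzWith K F)
    {p : ENNReal} (hμ : MemLp id p μ) (x : E) (σ : ℝ) :
    MemLp (fun w => F (x + σ • w)) p μ := by
  have hG : LipschitzWith K fun v => F (x + v) - F x :=
    LipschitzWith.of_dist_le_mul fun u v => by simpa using hF.dist_le_mul (x + u) (x + v)
  convert (hG.comp_memLp (by simp) (hμ.const_smul σ)).add (memLp_const (F x)) using 1
  ext w
  simp

variable [OpensMeasurableSpace E]

lemma LipschitzWith.tendsto_integral_comp_add_smul [IsProbabilityMeasure μ]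
    (hF : LipschitzWith K F) (hμ : Integrable (‖·‖) μ) (x : E) :
    Tendsto (fun σ : ℝ => ∫ w, F (x + σ • w) ∂μ) (𝓝 0) (𝓝 (F x)) := by
  have hbound : ∀ σ ∈ Metric.closedBall (0 : ℝ) 1, ∀ w, ‖F (x + σ • w)‖ ≤ ‖F x‖ + K * ‖w‖ := by
    intro σ hσ w
    have hσ : ‖σ‖ ≤ 1 := by simpa using hσ
    calc ‖F (x + σ • w)‖ ≤ ‖F x‖ + ‖F (x + σ • w) - F x‖ := norm_le_insert' _ _
      _ ≤ ‖F x‖ + K * (‖σ‖ * ‖w‖) := by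
        simpa [norm_smul] using hF.norm_sub_le (x + σ • w) x
      _ ≤ ‖F x‖ + K * ‖w‖ := by gcongr; exact mul_le_of_le_one_left (norm_nonneg w) hσ
  have hFc := hF.continuous
  simpa using tendsto_integral_filter_of_dominated_convergence (f := fun _ => F x)
    (fun w => ‖F x‖ + K * ‖w‖)
    (Eventually.of_forall fun σ => (hFc.comp (by fun_prop)).aestronglyMeasurable)
    (eventually_of_mem (Metric.closedBall_mem_nhds 0 one_pos) fun σ hσ =>
      Eventually.of_forall (hbound σ hσ))
    ((integrable_const _).add (hμ.const_mul _))
    (Eventually.of_forall fun w =>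
      (hFc.comp (by fun_prop : Continuous fun σ : ℝ => x + σ • w)).tendsto' 0 _ (by simp))

lemma LipschitzWith.tendsto_integral_slope_mul (hF : LipschitzWith K F) {x : E}
    (hx : DifferentiableAt ℝ F x) {g : E → ℝ} (hg : AEStronglyMeasurable g μ)
    (hgw : Integrable (fun w => ‖w‖ * g w) μ) :
    Tendsto (fun σ : ℝ => ∫ w, σ⁻¹ * (F (x + σ • w) - F x) * g w ∂μ) (𝓝[≠] 0)
      (𝓝 (∫ w, fderiv ℝ F x w * g w ∂μ)) := by
  have hFc := hF.continuous
  refine tendsto_integral_filter_of_dominated_convergence (fun w => K * ‖‖w‖ * g w‖)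
    (Eventually.of_forall fun σ => ?_) ?_ (hgw.norm.const_mul _) ?_
  · exact (Continuous.aestronglyMeasurable (by fun_prop)).mul hg
  · filter_upwards [self_mem_nhdsWithin] with σ (hσ : σ ≠ 0)
    refine Eventually.of_forall fun w => ?_
    have hσ' : 0 < ‖σ‖ := norm_pos_iff.2 hσ
    have := hF.norm_sub_le (x + σ • w) x
    rw [add_sub_cancel_left, norm_smul] at this
    calc ‖σ⁻¹ * (F (x + σ • w) - F x) * g w‖ = ‖σ‖⁻¹ * ‖F (x + σ • w) - F x‖ * ‖g w‖ := by
          simp [norm_mul, norm_inv]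
      _ ≤ ‖σ‖⁻¹ * (K * (‖σ‖ * ‖w‖)) * ‖g w‖ := by gcongr
      _ = K * ‖‖w‖ * g w‖ := by
          rw [norm_mul, norm_norm]; field_simp
  · refine Eventually.of_forall fun w => ?_
    simpa using ((hx.hasFDerivAt.hasLineDerivAt w).tendsto_slope_zero).mul_const (g w)

end

namespace MeasureTheory

variable {ι : Type*} [Fintype ι] [DecidableEq ι]

structure IsIsotropic (μ : Measure (ι → ℝ)) : Prop where
  memLp_eval (i : ι) : MemLp (fun w => w i) 2 μ
  integral_eval (i : ι) : ∫ w, w i ∂μ = 0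
  integral_eval_mul_eval (i j : ι) : ∫ w, w i * w j ∂μ = if i = j then 1 else 0

namespace IsIsotropic

variable {μ : Measure (ι → ℝ)} (hμ : IsIsotropic μ)
include hμ

lemma memLp_id : MemLp id 2 μ := MemLp.of_eval hμ.memLp_eval

variable [IsProbabilityMeasure μ]

lemma memLp_affine (a : ℝ) (c : ι → ℝ) : MemLp (fun w => a + ∑ i, c i * w i) 2 μ :=
  (memLp_const a).add (memLp_finsetSum _ fun i _ => (hμ.memLp_eval i).const_mul (c i))

lemma integral_mul_affine {G : (ι → ℝ) → ℝ} (hG : MemLp G 2 μ) (a : ℝ) (c : ι → ℝ) :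
    ∫ w, G w * (a + ∑ i, c i * w i) ∂μ = a * ∫ w, G w ∂μ + ∑ i, c i * ∫ w, G w * w i ∂μ := by
  have hGw (i : ι) : Integrable (fun w => c i * (G w * w i)) μ :=
    (hG.integrable_mul (hμ.memLp_eval i)).const_mul (c i)
  simp_rw [mul_add, Finset.mul_sum, mul_left_comm (G _), mul_comm (G _) a]
  rw [integral_add ((hG.integrable one_le_two).const_mul a)
      (integrable_finsetSum _ fun i _ => hGw i),
    integral_finsetSum _ fun i _ => hGw i]
  simp only [integral_const_mul]

lemma integral_affine (a : ℝ) (c : ι → ℝ) : ∫ w, (a + ∑ i, c i * w i) ∂μ = a := by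
  simpa [hμ.integral_eval] using hμ.integral_mul_affine (memLp_const 1) a c

lemma integral_affine_mul_eval (a : ℝ) (c : ι → ℝ) (j : ι) :
    ∫ w, (a + ∑ i, c i * w i) * w j ∂μ = c j := by
  simp_rw [mul_comm (a + _)]
  simp [hμ.integral_mul_affine (hμ.memLp_eval j), hμ.integral_eval, hμ.integral_eval_mul_eval]

lemma integral_affine_sq (a : ℝ) (c : ι → ℝ) :
    ∫ w, (a + ∑ i, c i * w i) ^ 2 ∂μ = a ^ 2 + ∑ i, c i ^ 2 := by
  simp_rw [sq, hμ.integral_mul_affine (hμ.memLp_affine a c), hμ.integral_affine,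
    hμ.integral_affine_mul_eval]

lemma integral_sq_sub_affine {G : (ι → ℝ) → ℝ} (hG : MemLp G 2 μ) (a : ℝ) (c : ι → ℝ) :
    ∫ w, (G w - (a + ∑ i, c i * w i)) ^ 2 ∂μ =
      ∫ w, G w ^ 2 ∂μ - 2 * (a * ∫ w, G w ∂μ + ∑ i, c i * ∫ w, G w * w i ∂μ)
        + (a ^ 2 + ∑ i, c i ^ 2) := by
  have hA := hμ.memLp_affine a c
  have hGA : Integrable (fun w => 2 * (G w * (a + ∑ i, c i * w i))) μ :=
    (hG.integrable_mul hA).const_mul 2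
  have hGsq_sub : Integrable (fun w => G w ^ 2 - 2 * (G w * (a + ∑ i, c i * w i))) μ :=
    hG.integrable_sq.sub hGA
  simp_rw [sub_sq, mul_assoc]
  rw [integral_add hGsq_sub hA.integrable_sq,
    integral_sub hG.integrable_sq hGA, integral_const_mul,
    hμ.integral_mul_affine hG, hμ.integral_affine_sq]

lemma integral_sq_sub_affine_le {G : (ι → ℝ) → ℝ} (hG : MemLp G 2 μ) (a : ℝ) (c : ι → ℝ) :
    ∫ w, (G w - (∫ v, G v ∂μ + ∑ i, (∫ v, G v * v i ∂μ) * w i)) ^ 2 ∂μ ≤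
      ∫ w, (G w - (a + ∑ i, c i * w i)) ^ 2 ∂μ := by
  rw [hμ.integral_sq_sub_affine hG, hμ.integral_sq_sub_affine hG]
  have h := add_nonneg (sq_nonneg (a - ∫ v, G v ∂μ))
    (Finset.sum_nonneg (s := .univ) fun i _ => sq_nonneg (c i - ∫ v, G v * v i ∂μ))
  simp only [sub_sq, mul_assoc, Finset.sum_add_distrib, Finset.sum_sub_distrib,
    ← Finset.mul_sum] at h
  simp only [← sq]
  linarith

lemma integral_clm_mul_eval (L : (ι → ℝ) →L[ℝ] ℝ) (j : ι) :
    ∫ w, L w * w j ∂μ = L (Pi.single j 1) := by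
  have hL (w : ι → ℝ) : L w = 0 + ∑ i, L (Pi.single i 1) * w i := by
    conv_lhs => rw [← Finset.univ_sum_single w]
    simp only [map_sum, zero_add]
    refine Finset.sum_congr rfl fun i _ => ?_
    rw [mul_comm, ← smul_eq_mul, ← L.map_smul, ← Pi.single_smul', smul_eq_mul, mul_one]
  rw [← hμ.integral_affine_mul_eval 0 (fun i => L (Pi.single i 1)) j]
  simp_rw [← hL]

lemma tendsto_integral_comp_add_smul_mul_eval_div {F : (ι → ℝ) → ℝ} {K : NNReal}
    (hF : LipschitzWith K F) {x : ι → ℝ} (hx : DifferentiableAt ℝ F x) (j : ι) :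
    Tendsto (fun σ : ℝ => (∫ w, F (x + σ • w) * w j ∂μ) / σ) (𝓝[≠] 0)
      (𝓝 (fderiv ℝ F x (Pi.single j 1))) := by
  have hj := hμ.memLp_eval j
  have hslope := hF.tendsto_integral_slope_mul hx hj.aestronglyMeasurable
    (hμ.memLp_id.norm.integrable_mul hj)
  rw [hμ.integral_clm_mul_eval] at hslope
  refine hslope.congr fun σ => ?_
  have hFj : Integrable (fun w => F (x + σ • w) * w j) μ :=
    (hF.memLp_comp_add_smul hμ.memLp_id x σ).integrable_mul hj
  simp_rw [mul_assoc, sub_mul]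
  rw [integral_const_mul, integral_sub hFj ((hj.integrable one_le_two).const_mul _),
    integral_const_mul, hμ.integral_eval, mul_zero, sub_zero, inv_mul_eq_div]

end IsIsotropic

lemma isIsotropic_pi {ν : ι → Measure ℝ} [∀ i, IsProbabilityMeasure (ν i)]
    (hmemLp : ∀ i, MemLp id 2 (ν i)) (hmean : ∀ i, ∫ x, x ∂ν i = 0)
    (hsq : ∀ i, ∫ x, x ^ 2 ∂ν i = 1) : IsIsotropic (Measure.pi ν) where
  memLp_eval i := (hmemLp i).comp_measurePreserving (measurePreserving_eval ν i)
  integral_eval i := by rw [integral_eval, hmean]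
  integral_eval_mul_eval i j := by
    rcases eq_or_ne i j with rfl | hij
    · simp_rw [← sq, integral_comp_eval (μ := ν) (f := fun x : ℝ => x ^ 2) (by fun_prop), hsq,
        if_pos]
    · have hindep :=
        (iIndepFun_pi (μ := ν) (X := fun _ => id) fun _ => aemeasurable_id).indepFun hij
      have := hindep.integral_mul_eq_mul_integral
        (measurable_pi_apply i).aestronglyMeasurable (measurable_pi_apply j).aestronglyMeasurable
      rw [if_neg hij]
      simpa [integral_eval, hmean] using this

lemma isIsotropic_pi_gaussianReal : IsIsotropic (Measure.pi fun _ : ι => gaussianReal 0 1) :=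
  isIsotropic_pi (fun _ => memLp_id_gaussianReal 2) (fun _ => integral_id_gaussianReal) fun _ => by
    simpa [variance_eq_integral measurable_id.aemeasurable] using
      variance_id_gaussianReal (μ := 0) (v := 1)

end MeasureTheory

lemma pi_gaussianReal_eq_map_smul {ι : Type*} [Fintype ι] (σ : ℝ) :
    Measure.pi (fun _ : ι => gaussianReal 0 (σ ^ 2).toNNReal) =
      (Measure.pi fun _ : ι => gaussianReal 0 1).map (σ • ·) := by
  have hσ : MeasurePreserving (σ * ·) (gaussianReal 0 1) (gaussianReal 0 (σ ^ 2).toNNReal) := by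
    refine ⟨measurable_const_mul σ, ?_⟩
    rw [gaussianReal_map_const_mul, mul_zero, mul_one]
    congr
    simp [sq_nonneg]
  exact ((measurePreserving_pi _ _ fun _ => hσ).map_eq).symm

lemma gaussAffineLoss_eq_integral {d : ℕ} {F : (Fin d → ℝ) → ℝ} (hF : Measurable F)
    (x : Fin d → ℝ) (σ a : ℝ) (b : Fin d → ℝ) :
    gaussAffineLoss d F x σ a b =
      ∫ w, (F (x + σ • w) - (a + ∑ i, (σ * b i) * w i)) ^ 2
        ∂(Measure.pi fun _ : Fin d => gaussianReal 0 1) := by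
  rw [gaussAffineLoss, pi_gaussianReal_eq_map_smul, integral_map (by fun_prop) (by fun_prop)]
  simp [mul_left_comm, mul_assoc]

theorem slime_gaussian_coefficients_tendsto_gradient_general
    (d : ℕ) (F : (Fin d → ℝ) → ℝ)
    (hLip : ∃ K : NNReal, LipschitzWith K F)
    (x : Fin d → ℝ) (hdiff : DifferentiableAt ℝ F x)
    (a : ℝ → ℝ) (b : ℝ → Fin d → ℝ)
    (huniq : ∀ σ : ℝ, 0 < σ → ∀ (a' : ℝ) (b' : Fin d → ℝ),
        (∀ (a'' : ℝ) (b'' : Fin d → ℝ),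
          gaussAffineLoss d F x σ a' b' ≤ gaussAffineLoss d F x σ a'' b'')
        → a' = a σ ∧ b' = b σ) :
    Tendsto a (𝓝[>] 0) (𝓝 (F x))
    ∧ Tendsto b (𝓝[>] 0) (𝓝 (fun i => fderiv ℝ F x (Pi.single i 1))) := by
  obtain ⟨K, hF⟩ := hLip
  set γ := Measure.pi fun _ : Fin d => gaussianReal 0 1
  have hγ : IsIsotropic γ := isIsotropic_pi_gaussianReal
  have hcoef : ∀ σ > 0, ∫ w, F (x + σ • w) ∂γ = a σ ∧
      (fun i => (∫ w, F (x + σ • w) * w i ∂γ) / σ) = b σ := by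
    intro σ hσ
    refine huniq σ hσ _ _ fun a' b' => ?_
    simp only [gaussAffineLoss_eq_integral hF.continuous.measurable, mul_div_cancel₀ _ hσ.ne']
    exact hγ.integral_sq_sub_affine_le (hF.memLp_comp_add_smul hγ.memLp_id x σ) _ _
  constructor
  · refine (hF.tendsto_integral_comp_add_smul (hγ.memLp_id.integrable one_le_two).norm x
      |>.mono_left nhdsWithin_le_nhds).congr' ?_
    filter_upwards [self_mem_nhdsWithin] with σ hσ using (hcoef σ hσ).1
  · refine tendsto_pi_nhds.2 fun i => ?_
    refine ((hγ.tendsto_integral_comp_add_smul_mul_eval_div hF hdiff i).mono_left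
      (nhdsWithin_mono _ fun σ hσ => ne_of_gt hσ)).congr' ?_
    filter_upwards [self_mem_nhdsWithin] with σ hσ using congrFun (hcoef σ hσ).2 i

/-- s-LIME recovers the gradient: for a Lipschitz black box `F` differentiable
at `x`, if `(a(σ), b(σ))` is the unique minimizer over affine functions of the
expected squared loss under the centered Gaussian with covariance `σ²·I`, then
as `σ → 0⁺` the intercept `a(σ)` converges to `F(x)` and the slope vector
`b(σ)` converges to the gradient `∇F(x)`. -/
theorem slime_gaussian_coefficients_tendsto_gradient
    (d : ℕ) (hd : 1 ≤ d) (F : (Fin d → ℝ) → ℝ)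
    (hLip : ∃ K : NNReal, LipschitzWith K F)
    (x : Fin d → ℝ) (hdiff : DifferentiableAt ℝ F x)
    (a : ℝ → ℝ) (b : ℝ → Fin d → ℝ)
    (hmin : ∀ σ : ℝ, 0 < σ → ∀ (a' : ℝ) (b' : Fin d → ℝ),
        gaussAffineLoss d F x σ (a σ) (b σ) ≤ gaussAffineLoss d F x σ a' b')
    (huniq : ∀ σ : ℝ, 0 < σ → ∀ (a' : ℝ) (b' : Fin d → ℝ),
        (∀ (a'' : ℝ) (b'' : Fin d → ℝ),
          gaussAffineLoss d F x σ a' b' ≤ gaussAffineLoss d F x σ a'' b'')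
        → a' = a σ ∧ b' = b σ) :
    Tendsto a (𝓝[>] 0) (𝓝 (F x))
    ∧ Tendsto b (𝓝[>] 0) (𝓝 (fun i => fderiv ℝ F x (Pi.single i 1))) :=
  slime_gaussian_coefficients_tendsto_gradient_general d F hLip x hdiff a b huniq
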